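/- Let P be a probability measure on ℝ, τ ∈ (0,1), and Φ(q) = ∫_ℝ (ρ_τ(x - q) - ρ_τ(x)) dP(x). Then q̄ minimizes Φ on ℝ if and only if q̄ is a τ-quantile of P, i.e., P((-∞, q̄)) ≤ τ ≤ P((-∞, q̄]). -/

import Mathlib

/-!
For `g ∈ [τ - 1, τ]` equal to `τ - 1` left of `0` and to `τ` right of `0`, `g` is a subgradient of
`ρ_τ`. If `Iio c ⊆ S ⊆ Iic c`, then `τ - 1_S(x)` is a subgradient of `ρ_τ` at `x - c`, and
integrating gives `Φ(q) - Φ(c) ≥ (τ - P S) (c - q)`. With `S = Iio c` for `q ≤ c` and `S = Iic c`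
for `q ≥ c`, the quantile condition makes the right side nonnegative. Conversely, exchanging the
roles of `q` and `c` gives `Φ(q) - Φ(c) ≤ (τ - P(Iic q)) (c - q)`; if `P(Iio c) > τ` or
`P(Iic c) < τ`, the left limit resp. right continuity of the distribution function produce a `q`
on the appropriate side of `c` making this negative.
-/

open MeasureTheory

noncomputable def rho (τ : ℝ) (x : ℝ) : ℝ := if x ≤ 0 then (τ - 1) * x else τ * x

open ProbabilityTheory Set

lemma rho_eq_mul_add_max (τ y : ℝ) : rho τ y = τ * y + max (-y) 0 := by
  unfold rho
  split_ifs with h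
  · rw [max_eq_left (by linarith)]; ring
  · rw [max_eq_right (by linarith)]; ring

@[fun_prop]
lemma continuous_rho (τ : ℝ) : Continuous (rho τ) := by
  rw [funext (rho_eq_mul_add_max τ)]
  fun_prop

lemma abs_rho_sub_rho_le (τ u v : ℝ) : |rho τ u - rho τ v| ≤ (|τ| + 1) * |u - v| := by
  have hmax := abs_max_sub_max_le_abs (-u) (-v) 0
  rw [neg_sub_neg, abs_sub_comm v u] at hmax
  calc |rho τ u - rho τ v| = |τ * (u - v) + (max (-u) 0 - max (-v) 0)| := by
        rw [rho_eq_mul_add_max, rho_eq_mul_add_max]; ring_nf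
    _ ≤ |τ| * |u - v| + |u - v| := by
        grw [abs_add_le, abs_mul, hmax]
    _ = (|τ| + 1) * |u - v| := by ring

lemma integrable_rho_sub_rho (P : Measure ℝ) [IsFiniteMeasure P] (τ q c : ℝ) :
    Integrable (fun x => rho τ (x - q) - rho τ (x - c)) P := by
  refine .of_bound (by fun_prop) ((|τ| + 1) * |c - q|) (ae_of_all _ fun x => ?_)
  simpa only [Real.norm_eq_abs, sub_sub_sub_cancel_left] using abs_rho_sub_rho_le τ (x - q) (x - c)

lemma integral_rho_sub_sub_integral_rho_sub (P : Measure ℝ) [IsFiniteMeasure P] (τ q c : ℝ) :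
    ∫ x, (rho τ (x - q) - rho τ x) ∂P - ∫ x, (rho τ (x - c) - rho τ x) ∂P =
      ∫ x, (rho τ (x - q) - rho τ (x - c)) ∂P := by
  have hint (a : ℝ) : Integrable (fun x => rho τ (x - a) - rho τ x) P := by
    simpa only [sub_zero] using integrable_rho_sub_rho P τ a 0
  rw [← integral_sub (hint q) (hint c)]
  simp only [sub_sub_sub_cancel_right]

lemma mul_sub_le_rho_sub_rho {τ g y y' : ℝ} (hg : g ∈ Icc (τ - 1) τ) (hneg : y < 0 → g = τ - 1)
    (hpos : 0 < y → g = τ) : g * (y' - y) ≤ rho τ y' - rho τ y := by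
  obtain ⟨hg₁, hg₂⟩ := hg
  unfold rho
  rcases lt_trichotomy y 0 with hy | rfl | hy
  · rw [hneg hy]; split_ifs <;> nlinarith
  · split_ifs <;> nlinarith
  · rw [hpos hy]; split_ifs <;> nlinarith

lemma integral_sub_indicator_one_mul (P : Measure ℝ) [IsProbabilityMeasure P] {S : Set ℝ}
    (hS : MeasurableSet S) (τ r : ℝ) :
    ∫ x, (τ - S.indicator 1 x) * r ∂P = (τ - P.real S) * r := by
  have hind : Integrable (S.indicator (1 : ℝ → ℝ)) P := (integrable_const 1).indicator hS
  rw [integral_mul_const, integral_sub (integrable_const τ) hind, integral_const,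
    integral_indicator_one hS]
  simp

lemma sub_measureReal_mul_le_integral_rho_sub_rho (P : Measure ℝ) [IsProbabilityMeasure P]
    (τ : ℝ) {S : Set ℝ} {c : ℝ} (hS : MeasurableSet S) (hSc : Iio c ⊆ S) (hcS : S ⊆ Iic c)
    (q : ℝ) : (τ - P.real S) * (c - q) ≤ ∫ x, (rho τ (x - q) - rho τ (x - c)) ∂P := by
  have hind : Integrable (S.indicator (1 : ℝ → ℝ)) P := (integrable_const 1).indicator hS
  rw [← integral_sub_indicator_one_mul P hS]
  refine integral_mono (((integrable_const τ).sub hind).mul_const _)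
    (integrable_rho_sub_rho P τ q c) fun x => ?_
  have hsub := mul_sub_le_rho_sub_rho (τ := τ) (g := τ - S.indicator 1 x) (y := x - c)
    (y' := x - q) ?_ ?_ ?_
  · rwa [sub_sub_sub_cancel_left] at hsub
  · by_cases hx : x ∈ S <;> simp [hx]
  · intro h
    simp [hSc (sub_neg.mp h)]
  · intro h
    simp [show x ∉ S from fun hx => (sub_pos.mp h).not_ge (hcS hx)]

lemma integral_rho_sub_rho_le (P : Measure ℝ) [IsProbabilityMeasure P] (τ q c : ℝ) :
    ∫ x, (rho τ (x - q) - rho τ (x - c)) ∂P ≤ (τ - P.real (Iic q)) * (c - q) := by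
  have h := sub_measureReal_mul_le_integral_rho_sub_rho P τ (c := q) measurableSet_Iic
    Iio_subset_Iic_self subset_rfl c
  have hswap : ∫ x, (rho τ (x - c) - rho τ (x - q)) ∂P =
      -∫ x, (rho τ (x - q) - rho τ (x - c)) ∂P := by
    rw [← integral_neg]
    simp only [neg_sub]
  linarith

lemma exists_lt_lt_measureReal_Iic_of_lt_measureReal_Iio (P : Measure ℝ)
    [IsProbabilityMeasure P] {τ c : ℝ} (h : τ < P.real (Iio c)) : ∃ q < c, τ < P.real (Iic q) := by
  have hIio : P.real (Iio c) = Function.leftLim (cdf P) c := by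
    have hcdf := (cdf P).measure_Iio (tendsto_cdf_atBot P) c
    rw [measure_cdf, sub_zero] at hcdf
    rw [measureReal_def, hcdf, ENNReal.toReal_ofReal
      ((cdf_nonneg P (c - 1)).trans ((cdf P).mono.le_leftLim (sub_one_lt c)))]
  have hev := ((cdf P).mono.tendsto_leftLim c).eventually (lt_mem_nhds (hIio ▸ h))
  obtain ⟨q, hτq, hqc⟩ := (hev.and self_mem_nhdsWithin).exists
  exact ⟨q, hqc, by rwa [← cdf_eq_real]⟩

lemma exists_gt_measureReal_Iic_lt_of_measureReal_Iic_lt (P : Measure ℝ)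
    [IsProbabilityMeasure P] {τ c : ℝ} (h : P.real (Iic c) < τ) : ∃ q > c, P.real (Iic q) < τ := by
  rw [← cdf_eq_real] at h
  have hev := (((cdf P).right_continuous c).mono Ioi_subset_Ici_self).eventually (gt_mem_nhds h)
  obtain ⟨q, hqτ, hcq⟩ := (hev.and self_mem_nhdsWithin).exists
  exact ⟨q, hcq, by rwa [← cdf_eq_real]⟩

theorem stmt14_general (P : Measure ℝ) [IsProbabilityMeasure P] (τ : ℝ)
    (qbar : ℝ) :
    (∀ q : ℝ, ∫ x, (rho τ (x - qbar) - rho τ x) ∂P ≤ ∫ x, (rho τ (x - q) - rho τ x) ∂P) ↔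
      ((P (Set.Iio qbar)).toReal ≤ τ ∧ τ ≤ (P (Set.Iic qbar)).toReal) := by
  have hΦ (q : ℝ) : ∫ x, (rho τ (x - qbar) - rho τ x) ∂P ≤ ∫ x, (rho τ (x - q) - rho τ x) ∂P ↔
      0 ≤ ∫ x, (rho τ (x - q) - rho τ (x - qbar)) ∂P := by
    rw [← sub_nonneg, integral_rho_sub_sub_integral_rho_sub]
  simp only [hΦ, ← measureReal_def]
  constructor
  · intro hmin
    refine ⟨le_of_not_gt fun hlt => ?_, le_of_not_gt fun hlt => ?_⟩
    · obtain ⟨q, hq, hτq⟩ := exists_lt_lt_measureReal_Iic_of_lt_measureReal_Iio P hlt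
      nlinarith [hmin q, integral_rho_sub_rho_le P τ q qbar]
    · obtain ⟨q, hq, hqτ⟩ := exists_gt_measureReal_Iic_lt_of_measureReal_Iic_lt P hlt
      nlinarith [hmin q, integral_rho_sub_rho_le P τ q qbar]
  · rintro ⟨hIio, hIic⟩ q
    rcases le_total q qbar with hq | hq
    · exact (mul_nonneg (sub_nonneg.2 hIio) (sub_nonneg.2 hq)).trans
        (sub_measureReal_mul_le_integral_rho_sub_rho P τ measurableSet_Iio subset_rfl
          Iio_subset_Iic_self q)
    · exact (mul_nonneg_of_nonpos_of_nonpos (sub_nonpos.2 hIic) (sub_nonpos.2 hq)).trans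
        (sub_measureReal_mul_le_integral_rho_sub_rho P τ measurableSet_Iic Iio_subset_Iic_self
          subset_rfl q)

theorem stmt14 (P : Measure ℝ) [IsProbabilityMeasure P] (τ : ℝ) (hτ : τ ∈ Set.Ioo (0:ℝ) 1)
    (qbar : ℝ) :
    (∀ q : ℝ, ∫ x, (rho τ (x - qbar) - rho τ x) ∂P ≤ ∫ x, (rho τ (x - q) - rho τ x) ∂P) ↔
      ((P (Set.Iio qbar)).toReal ≤ τ ∧ τ ≤ (P (Set.Iic qbar)).toReal) :=
  stmt14_general P τ qbar
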